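/- arXiv:1203.0407 — 2 statements merged into one kernel-verified Lean document; each statement's English description precedes it below -/
import Mathlib

section
/- Let P be a stack polyomino. Then the set of all inner 2-minors of P forms a reduced quadratic Gröbner basis of I_P with respect to the lexicographic order induced by x_{(i,j)} > x_{(k,l)} iff i > k, or i = k and j > l. -/
open scoped BigOperators

abbrev Cell : Type := ℕ × ℕ

/-- The four corners of the unit cell with lower left corner `a`. -/
def cellVerts (a : Cell) : Finset (ℕ × ℕ) :=
  {a, (a.1 + 1, a.2), (a.1, a.2 + 1), (a.1 + 1, a.2 + 1)}

/-- The vertex set of a collection of cells. -/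
def verts (P : Finset Cell) : Finset (ℕ × ℕ) := P.biUnion cellVerts

/-- Row convexity of a collection of cells. -/
def RowConvex (P : Finset Cell) : Prop :=
  ∀ a ∈ P, ∀ b ∈ P, a.2 = b.2 → ∀ r : ℕ, a.1 ≤ r → r ≤ b.1 → (r, a.2) ∈ P

/-- Column convexity of a collection of cells. -/
def ColConvex (P : Finset Cell) : Prop :=
  ∀ a ∈ P, ∀ b ∈ P, a.1 = b.1 → ∀ s : ℕ, a.2 ≤ s → s ≤ b.2 → (a.1, s) ∈ P

/-- A collection of cells is convex if it is row and column convex. -/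
def IsConvexColl (P : Finset Cell) : Prop := RowConvex P ∧ ColConvex P

/-- Weak connectedness: any two cells are joined by a sequence of cells of `P`
in which consecutive cells share at least one vertex. -/
def WeaklyConnected (P : Finset Cell) : Prop :=
  ∀ a ∈ P, ∀ b ∈ P,
    Relation.ReflTransGen
      (fun c d => c ∈ P ∧ d ∈ P ∧ (cellVerts c ∩ cellVerts d).Nonempty) a b

/-- Two cells share an edge. -/
def edgeAdj (a b : Cell) : Prop :=
  (a.1 = b.1 ∧ (a.2 + 1 = b.2 ∨ b.2 + 1 = a.2)) ∨
  (a.2 = b.2 ∧ (a.1 + 1 = b.1 ∨ b.1 + 1 = a.1))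

/-- Connectedness: any two cells are joined by an edge-sharing path of cells of `P`. -/
def ConnectedColl (P : Finset Cell) : Prop :=
  ∀ a ∈ P, ∀ b ∈ P,
    Relation.ReflTransGen (fun c d => c ∈ P ∧ d ∈ P ∧ edgeAdj c d) a b

/-- `Q` is a connected component of `P`. -/
def IsComponent (P Q : Finset Cell) : Prop :=
  Q ⊆ P ∧ Q.Nonempty ∧ ConnectedColl Q ∧
    ∀ R : Finset Cell, Q ⊆ R → R ⊆ P → ConnectedColl R → R = Q

/-- The cell `c` belongs to the interval `[a,b]`. -/
def cellInBox (a b : ℕ × ℕ) (c : Cell) : Prop :=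
  a.1 ≤ c.1 ∧ c.1 + 1 ≤ b.1 ∧ a.2 ≤ c.2 ∧ c.2 + 1 ≤ b.2

/-- `c` is a border cell of the interval `[a,b]`. -/
def borderCell (a b : ℕ × ℕ) (c : Cell) : Prop :=
  cellInBox a b c ∧ (c.1 = a.1 ∨ c.1 + 1 = b.1 ∨ c.2 = a.2 ∨ c.2 + 1 = b.2)

/-- A collection of cells is simple (has no holes). -/
def SimpleColl (P : Finset Cell) : Prop :=
  ∀ a b : ℕ × ℕ, a.1 < b.1 → a.2 < b.2 →
    (∀ v ∈ verts P, a.1 < v.1 ∧ v.1 < b.1 ∧ a.2 < v.2 ∧ v.2 < b.2) →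
    ∀ c : Cell, cellInBox a b c → c ∉ P →
      ∃ d : Cell, borderCell a b d ∧
        Relation.ReflTransGen
          (fun u v => cellInBox a b u ∧ cellInBox a b v ∧ u ∉ P ∧ v ∉ P ∧ edgeAdj u v) c d

/-- `[a,b]` is an inner interval of `P`: it is proper and all of its cells belong to `P`. -/
def InnerInterval (P : Finset Cell) (a b : ℕ × ℕ) : Prop :=
  a.1 < b.1 ∧ a.2 < b.2 ∧
    ∀ r s : ℕ, a.1 ≤ r → r < b.1 → a.2 ≤ s → s < b.2 → (r, s) ∈ P

/-- The set of inner 2-minors of `P`. -/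
def innerMinors (K : Type*) [Field K] (P : Finset Cell) :
    Set (MvPolynomial {v : ℕ × ℕ // v ∈ verts P} K) :=
  { f | ∃ a b c d : {v : ℕ × ℕ // v ∈ verts P},
      InnerInterval P a.1 b.1 ∧ c.1 = (b.1.1, a.1.2) ∧ d.1 = (a.1.1, b.1.2) ∧
      f = MvPolynomial.X a * MvPolynomial.X b - MvPolynomial.X c * MvPolynomial.X d }

/-- The ideal of inner 2-minors of `P`. -/
noncomputable def innerIdeal (K : Type*) [Field K] (P : Finset Cell) :
    Ideal (MvPolynomial {v : ℕ × ℕ // v ∈ verts P} K) :=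
  Ideal.span (innerMinors K P)

/-- The variable order for the lexicographic order `<¹_lex`:
`x_{(i,j)} > x_{(k,l)}` iff `i > k`, or `i = k` and `j > l`. -/
def varGt (a b : ℕ × ℕ) : Prop := b.1 < a.1 ∨ (a.1 = b.1 ∧ b.2 < a.2)

/-- The induced lexicographic order on monomials (exponent vectors): `m < m'` iff at the
greatest variable where they differ, `m` has the smaller exponent. -/
def monLt {P : Finset Cell} (m m' : {v : ℕ × ℕ // v ∈ verts P} →₀ ℕ) : Prop :=
  ∃ a : {v : ℕ × ℕ // v ∈ verts P},
    m a < m' a ∧ ∀ b : {v : ℕ × ℕ // v ∈ verts P}, varGt b.1 a.1 → m b = m' b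

/-- `m` is the leading monomial of `f` with respect to `<¹_lex`. -/
def IsLeadMon {K : Type*} [Field K] {P : Finset Cell}
    (f : MvPolynomial {v : ℕ × ℕ // v ∈ verts P} K)
    (m : {v : ℕ × ℕ // v ∈ verts P} →₀ ℕ) : Prop :=
  m ∈ f.support ∧ ∀ m' ∈ f.support, m' ≠ m → monLt m' m

/-- `G` is a Gröbner basis of the ideal `I` with respect to `<¹_lex`. -/
def IsGroebnerBasis {K : Type*} [Field K] {P : Finset Cell}
    (G : Set (MvPolynomial {v : ℕ × ℕ // v ∈ verts P} K))
    (I : Ideal (MvPolynomial {v : ℕ × ℕ // v ∈ verts P} K)) : Prop :=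
  (∀ g ∈ G, g ∈ I) ∧
  ∀ f ∈ I, f ≠ 0 → ∃ g ∈ G, ∃ mg mf, IsLeadMon g mg ∧ IsLeadMon f mf ∧
    ∃ d, mf = mg + d

/-- `G` is a reduced Gröbner basis of `I` with respect to `<¹_lex`: it is a Gröbner
basis, each element is monic, and no monomial occurring in an element of `G` is
divisible by the leading monomial of another element of `G`. -/
def IsReducedGroebnerBasis {K : Type*} [Field K] {P : Finset Cell}
    (G : Set (MvPolynomial {v : ℕ × ℕ // v ∈ verts P} K))
    (I : Ideal (MvPolynomial {v : ℕ × ℕ // v ∈ verts P} K)) : Prop :=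
  IsGroebnerBasis G I ∧
  (∀ g ∈ G, ∃ m, IsLeadMon g m ∧ g.coeff m = 1) ∧
  (∀ g ∈ G, ∀ g' ∈ G, g' ≠ g → ∀ m ∈ g.support, ∀ m',
      IsLeadMon g' m' → ¬ ∃ d, m = m' + d)

/-- `P` is a stack polyomino: a convex collection of cells which is a union of
vertical cell intervals whose bottom cells all lie in one row. -/
def StackPolyomino (P : Finset Cell) : Prop :=
  P.Nonempty ∧ IsConvexColl P ∧
    ∃ j₀ : ℕ, (∀ c ∈ P, j₀ ≤ c.2) ∧ ∀ c ∈ P, (c.1, j₀) ∈ P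


/-!
The leading monomial of the inner minor `x_a x_b - x_c x_d` of an inner interval `[a, b]` is the
diagonal product `x_a x_b`; call a monomial standard if no such product divides it.

Inner minors are homogeneous for the toric bidegree `x_(i,j) ↦ s_i t_j`, so in every polynomial of
`I_P` the coefficients of each bidegree class sum to zero. Trading `x_a x_b` for `x_c x_d` lowers a
monomial without changing its bidegree, so below every monomial lies a standard one of the same
bidegree. In a stack polyomino there is only one standard monomial of a given bidegree: two such
agree on their top row, since otherwise one of them would contain a variable of that row together
with a variable lower down and further left, and by column convexity down to the base row these
span an inner interval. So a standard monomial is the least of its class and cannot be the leading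
monomial of an element of `I_P`, whose class contains another monomial of its support.
-/

open Finsupp MvPolynomial

namespace Finsupp

variable {α β M : Type*}

theorem single_one_add_single_one_inj {u w a b : α} :
    single u 1 + single w 1 = single a 1 + single b 1 ↔
      (u = a ∧ w = b) ∨ (u = b ∧ w = a) := by
  rw [single_add_single_eq_single_add_single one_ne_zero one_ne_zero]
  simp

theorem single_one_add_single_one_le {m : α →₀ ℕ} {a b : α} (hab : a ≠ b)
    (ha : m a ≠ 0) (hb : m b ≠ 0) : single a 1 + single b 1 ≤ m := by
  classical
  intro v
  simp only [coe_add, Pi.add_apply, single_apply]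
  split_ifs <;> grind

theorem apply_le_mapDomain_apply [AddCommMonoid M] [PartialOrder M] [CanonicallyOrderedAdd M]
    (f : α → β) (x : α →₀ M) (a : α) : x a ≤ x.mapDomain f (f a) := by
  classical
  rw [mapDomain_apply_eq_sum]
  by_cases ha : a ∈ x.support
  · exact Finset.single_le_sum_of_canonicallyOrdered (Finset.mem_filter.mpr ⟨ha, rfl⟩)
  · simp [notMem_support_iff.mp ha]

theorem exists_ne_of_lt_mapDomain_apply [AddCommMonoid M] [Preorder M] {f : α → β}
    {x : α →₀ M} {a : α} (h : x a < x.mapDomain f (f a)) :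
    ∃ b, x b ≠ 0 ∧ f b = f a ∧ b ≠ a := by
  classical
  by_contra! hb
  rw [mapDomain_apply_eq_sum, Finset.sum_eq_single a] at h
  · exact lt_irrefl _ h
  · exact fun b hb' hne => not_not.mp fun h0 => hne (hb b h0 (Finset.mem_filter.mp hb').2)
  · simp

theorem mapDomain_apply_eq_sum_univ [Fintype α] [DecidableEq β] [AddCommMonoid M] (f : α → β)
    (x : α →₀ M) (b : β) : x.mapDomain f b = ∑ a with f a = b, x a := by
  simp [mapDomain, sum_fintype, single_apply, Finset.sum_filter]

theorem exists_lt_of_mapDomain_eq [Fintype α] [AddCommMonoid M] [LinearOrder M]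
    [IsOrderedCancelAddMonoid M] {f : α → β} {x x' : α →₀ M}
    (h : x.mapDomain f = x'.mapDomain f) {a : α} (hne : x a ≠ x' a) :
    ∃ b, f b = f a ∧ x' b < x b := by
  classical
  by_contra! hle
  have hfa := congrArg (· (f a)) h
  simp only [mapDomain_apply_eq_sum_univ] at hfa
  exact hfa.not_lt (Finset.sum_lt_sum (fun b hb => hle b (Finset.mem_filter.mp hb).2)
    ⟨a, by simp, lt_of_le_of_ne (hle a rfl) hne⟩)

end Finsupp

namespace MvPolynomial

variable {σ M R : Type*} [AddCommMonoid M] [CommRing R]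

theorem exists_ne_mem_support_of_mapDomain_eq_zero {φ : (σ →₀ ℕ) →+ M}
    {f : MvPolynomial σ R} (hf : AddMonoidAlgebra.mapDomainRingHom R φ f = 0)
    {m : σ →₀ ℕ} (hm : m ∈ f.support) :
    ∃ m' ∈ f.support, m' ≠ m ∧ φ m' = φ m := by
  classical
  by_contra! h
  have hcoeff := congrArg (fun g => AddMonoidAlgebra.coeff g (φ m)) hf
  simp only [AddMonoidAlgebra.mapDomainRingHom_apply, AddMonoidAlgebra.coeff_mapDomain,
    mapDomain_apply_eq_sum] at hcoeff
  change ∑ i ∈ f.support with φ i = φ m, coeff i f = 0 at hcoeff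
  rw [Finset.sum_eq_single_of_mem m (Finset.mem_filter.mpr ⟨hm, (rfl : φ m = φ m)⟩)] at hcoeff
  · exact mem_support_iff.mp hm hcoeff
  · intro m' hm' hne
    exact absurd (Finset.mem_filter.mp hm').2 (h m' (Finset.mem_filter.mp hm').1 hne)

theorem eq_or_eq_of_mem_support_monomial_sub_monomial {p q m : σ →₀ ℕ}
    (hm : m ∈ (monomial p (1 : R) - monomial q 1).support) : m = p ∨ m = q := by
  classical
  by_contra! h
  simp [coeff_monomial, Ne.symm h.1, Ne.symm h.2] at hm

theorem coeff_monomial_sub_monomial_self [Nontrivial R] {p q : σ →₀ ℕ} (h : q ≠ p) :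
    coeff p (monomial p (1 : R) - monomial q 1) = 1 := by
  classical
  simp [coeff_monomial, h]

theorem X_mul_X (u w : σ) :
    (X u * X w : MvPolynomial σ R) = monomial (single u 1 + single w 1) 1 := by
  simp [X, monomial_mul]

end MvPolynomial

section Polyomino

variable {P : Finset Cell}

section MonomialOrder

def toLexVert (P : Finset Cell) : verts P ↪ Lex (ℕ × ℕ) :=
  ⟨fun v => toLex v.1, fun _ _ h => Subtype.ext (toLex.injective h)⟩

/-- `monLt` is the colex order of exponent vectors whose variables are ranked lexicographically. -/
noncomputable def monKey (m : verts P →₀ ℕ) : Colex (Lex (ℕ × ℕ) →₀ ℕ) :=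
  toColex (m.embDomain (toLexVert P))

@[simp]
theorem monKey_apply_toLexVert (m : verts P →₀ ℕ) (v : verts P) :
    ofColex (monKey m) (toLexVert P v) = m v :=
  embDomain_apply_self _ m v

theorem monKey_apply_of_notMem_range {m : verts P →₀ ℕ} {i : Lex (ℕ × ℕ)}
    (hi : i ∉ Set.range (toLexVert P)) : ofColex (monKey m) i = 0 :=
  embDomain_of_notMem_range _ _ _ hi

theorem monKey_injective : Function.Injective (monKey (P := P)) :=
  toColex.injective.comp (embDomain_injective _)

theorem varGt_iff_toLexVert_lt {a b : verts P} :
    varGt a.1 b.1 ↔ toLexVert P b < toLexVert P a := by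
  change _ ↔ toLex b.1 < toLex a.1
  rw [Prod.Lex.toLex_lt_toLex, varGt]
  omega

theorem monLt_iff_monKey_lt {m m' : verts P →₀ ℕ} : monLt m m' ↔ monKey m < monKey m' := by
  rw [Finsupp.Colex.lt_iff]
  constructor
  · rintro ⟨a, hlt, heq⟩
    refine ⟨toLexVert P a, fun j hj => ?_, by simpa using hlt⟩
    by_cases hj' : j ∈ Set.range (toLexVert P)
    · obtain ⟨b, rfl⟩ := hj'
      simpa using heq b (varGt_iff_toLexVert_lt.mpr hj)
    · rw [monKey_apply_of_notMem_range hj', monKey_apply_of_notMem_range hj']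
  · rintro ⟨i, heq, hlt⟩
    by_cases hi : i ∈ Set.range (toLexVert P)
    · obtain ⟨a, rfl⟩ := hi
      exact ⟨a, by simpa using hlt,
        fun b hb => by simpa using heq _ (varGt_iff_toLexVert_lt.mp hb)⟩
    · rw [monKey_apply_of_notMem_range hi, monKey_apply_of_notMem_range hi] at hlt
      exact absurd hlt (lt_irrefl 0)

theorem monLt.ne {m m' : verts P →₀ ℕ} (h : monLt m m') : m ≠ m' :=
  fun e => lt_irrefl _ (monLt_iff_monKey_lt.mp (e ▸ h))

theorem monLt.add_left {m m' : verts P →₀ ℕ} (h : monLt m m') (u : verts P →₀ ℕ) :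
    monLt (u + m) (u + m') := by
  obtain ⟨a, hlt, heq⟩ := h
  exact ⟨a, by simpa using hlt, fun b hb => by simp [heq b hb]⟩

variable {K : Type*} [Field K]

theorem exists_isLeadMon {f : MvPolynomial (verts P) K} (hf : f ≠ 0) : ∃ m, IsLeadMon f m := by
  obtain ⟨m, hm, hmax⟩ := f.support.exists_max_image monKey (support_nonempty.mpr hf)
  exact ⟨m, hm, fun m' hm' hne => monLt_iff_monKey_lt.mpr
    ((hmax m' hm').lt_of_ne (monKey_injective.ne hne))⟩

theorem IsLeadMon.eq {f : MvPolynomial (verts P) K} {m m' : verts P →₀ ℕ}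
    (h : IsLeadMon f m) (h' : IsLeadMon f m') : m = m' := by
  by_contra hne
  exact lt_asymm (monLt_iff_monKey_lt.mp (h.2 m' h'.1 (Ne.symm hne)))
    (monLt_iff_monKey_lt.mp (h'.2 m h.1 hne))

theorem isLeadMon_monomial_sub_monomial {p q : verts P →₀ ℕ} (h : monLt q p) :
    IsLeadMon (monomial p (1 : K) - monomial q 1) p := by
  refine ⟨by simp [coeff_monomial_sub_monomial_self h.ne], fun m hm hne => ?_⟩
  obtain rfl | rfl := eq_or_eq_of_mem_support_monomial_sub_monomial hm
  exacts [absurd rfl hne, h]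

end MonomialOrder

section Geometry

theorem mem_verts_of_mem_cellVerts {c : Cell} (hc : c ∈ P) {v : ℕ × ℕ}
    (hv : v ∈ cellVerts c) : v ∈ verts P :=
  Finset.mem_biUnion.mpr ⟨c, hc, hv⟩

theorem InnerInterval.lowerRight_mem_verts {a b : ℕ × ℕ} (h : InnerInterval P a b) :
    (b.1, a.2) ∈ verts P := by
  obtain ⟨h1, h2, hmem⟩ := h
  exact mem_verts_of_mem_cellVerts (hmem (b.1 - 1) a.2 (by omega) (by omega) le_rfl h2)
    (by simp [cellVerts]; omega)

theorem InnerInterval.upperLeft_mem_verts {a b : ℕ × ℕ} (h : InnerInterval P a b) :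
    (a.1, b.2) ∈ verts P := by
  obtain ⟨h1, h2, hmem⟩ := h
  exact mem_verts_of_mem_cellVerts (hmem a.1 (b.2 - 1) le_rfl h1 (by omega) (by omega))
    (by simp [cellVerts]; omega)

theorem le_snd_of_mem_verts {j₀ : ℕ} (hbot : ∀ c ∈ P, j₀ ≤ c.2) {v : ℕ × ℕ}
    (hv : v ∈ verts P) : j₀ ≤ v.2 := by
  obtain ⟨c, hc, hvc⟩ := Finset.mem_biUnion.mp hv
  have := hbot c hc
  simp only [cellVerts, Finset.mem_insert, Finset.mem_singleton] at hvc
  rcases hvc with rfl | rfl | rfl | rfl <;> simp <;> omega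

theorem exists_cell_below_of_mem_verts {j₀ : ℕ} (hcol : ColConvex P)
    (hbase : ∀ c ∈ P, (c.1, j₀) ∈ P) {k y : ℕ} (hv : (k, y) ∈ verts P) (hy : j₀ < y) :
    ∃ x, (x, y - 1) ∈ P ∧ (k = x ∨ k = x + 1) := by
  obtain ⟨c, hc, hvc⟩ := Finset.mem_biUnion.mp hv
  simp only [cellVerts, Finset.mem_insert, Finset.mem_singleton, Prod.ext_iff] at hvc
  refine ⟨c.1, hcol _ (hbase c hc) c hc rfl (y - 1) (by omega) (by omega), by omega⟩

theorem StackPolyomino.innerInterval_of_mem_verts (hs : StackPolyomino P) {v w : ℕ × ℕ}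
    (hv : v ∈ verts P) (hvw : (v.1, w.2) ∈ verts P) (hw : w ∈ verts P)
    (h1 : v.1 < w.1) (h2 : v.2 < w.2) : InnerInterval P v w := by
  obtain ⟨-, ⟨hrow, hcol⟩, j₀, hbot, hbase⟩ := hs
  have hj := le_snd_of_mem_verts hbot hv
  obtain ⟨x, hx, hxv⟩ := exists_cell_below_of_mem_verts hcol hbase hvw (by omega)
  obtain ⟨x', hx', hxw⟩ := exists_cell_below_of_mem_verts hcol hbase hw (by omega)
  refine ⟨h1, h2, fun r s hr1 hr2 hs1 hs2 => ?_⟩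
  have htop : (r, w.2 - 1) ∈ P := hrow _ hx _ hx' rfl r (by omega) (by omega)
  exact hcol _ (hbase _ htop) _ htop rfl s (by omega) (by omega)

end Geometry

section StandardMonomials

/-- The bidegree of a monomial under the toric map `x_(i,j) ↦ s_i t_j`: how many of its
variables lie in each column and in each row. Inner 2-minors are homogeneous for it. -/
noncomputable def toricDegree : (verts P →₀ ℕ) →+ (ℕ →₀ ℕ) × (ℕ →₀ ℕ) :=
  (mapDomain.addMonoidHom fun v : verts P => v.1.1).prod (mapDomain.addMonoidHom fun v => v.1.2)

theorem toricDegree_apply (m : verts P →₀ ℕ) :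
    toricDegree m = (m.mapDomain fun v => v.1.1, m.mapDomain fun v => v.1.2) :=
  rfl

theorem toricDegree_antidiagonal {a b c d : verts P} (hc : c.1 = (b.1.1, a.1.2))
    (hd : d.1 = (a.1.1, b.1.2)) :
    toricDegree (single c 1 + single d 1) = toricDegree (single a 1 + single b 1) := by
  simp [toricDegree_apply, mapDomain_add, hc, hd, add_comm]

theorem monLt_antidiagonal {a b c d : verts P} (h1 : a.1.1 < b.1.1) (h2 : a.1.2 < b.1.2)
    (hc : c.1 = (b.1.1, a.1.2)) (hd : d.1 = (a.1.1, b.1.2)) :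
    monLt (single c 1 + single d 1) (single a 1 + single b 1) := by
  have hc' : c.1.1 = b.1.1 ∧ c.1.2 = a.1.2 := by simp [hc]
  have hd' : d.1.1 = a.1.1 ∧ d.1.2 = b.1.2 := by simp [hd]
  have ne_of : ∀ u w : verts P, u.1.1 ≠ w.1.1 ∨ u.1.2 ≠ w.1.2 → u ≠ w := by
    rintro u w h rfl
    omega
  refine ⟨b, ?_, fun v hv => ?_⟩
  · rw [Finsupp.add_apply, Finsupp.add_apply, single_eq_same,
      single_eq_of_ne (ne_of _ _ (by omega)), single_eq_of_ne (ne_of _ _ (by omega)),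
      single_eq_of_ne (ne_of _ _ (by omega))]
    omega
  · unfold varGt at hv
    rw [Finsupp.add_apply, Finsupp.add_apply, single_eq_of_ne (ne_of _ _ (by omega)),
      single_eq_of_ne (ne_of _ _ (by omega)), single_eq_of_ne (ne_of _ _ (by omega)),
      single_eq_of_ne (ne_of _ _ (by omega))]

variable (P) in
def IsStandard (m : verts P →₀ ℕ) : Prop :=
  ∀ a b : verts P, InnerInterval P a b → ¬ single a 1 + single b 1 ≤ m

theorem IsStandard.mono {m n : verts P →₀ ℕ} (hm : IsStandard P m) (h : n ≤ m) :
    IsStandard P n :=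
  fun a b hab hle => hm a b hab (hle.trans h)

theorem exists_isStandard_toricDegree_eq (m : verts P →₀ ℕ) :
    ∃ n, IsStandard P n ∧ toricDegree n = toricDegree m ∧ monKey n ≤ monKey m := by
  induction m using (InvImage.wf monKey wellFounded_lt).induction with
  | _ m ih =>
  by_cases hstd : IsStandard P m
  · exact ⟨m, hstd, rfl, le_rfl⟩
  simp only [IsStandard, not_forall, not_not] at hstd
  obtain ⟨a, b, hab, hle⟩ := hstd
  let c : verts P := ⟨(b.1.1, a.1.2), hab.lowerRight_mem_verts⟩
  let d : verts P := ⟨(a.1.1, b.1.2), hab.upperLeft_mem_verts⟩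
  have hlt : monKey (m - (single a 1 + single b 1) + (single c 1 + single d 1)) < monKey m := by
    have := (monLt_antidiagonal (c := c) (d := d) hab.1 hab.2.1 rfl rfl).add_left
      (m - (single a 1 + single b 1))
    rwa [tsub_add_cancel_of_le hle, monLt_iff_monKey_lt] at this
  obtain ⟨n, hn, hdeg, hkey⟩ := ih _ hlt
  refine ⟨n, hn, ?_, hkey.trans hlt.le⟩
  rw [hdeg, map_add, toricDegree_antidiagonal (a := a) (b := b) (c := c) (d := d) rfl rfl,
    ← map_add, tsub_add_cancel_of_le hle]

theorem IsStandard.apply_eq_zero_of_lt (hs : StackPolyomino P) {m m' : verts P →₀ ℕ}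
    (hm' : IsStandard P m') (hcol : m.mapDomain (fun v => v.1.1) = m'.mapDomain (fun v => v.1.1))
    {y : ℕ} (htop : ∀ v : verts P, y < v.1.2 → m' v = 0) {p r : verts P}
    (hp : p.1.2 = y) (hr : r.1.2 = y) (hpr : p.1.1 < r.1.1) (hlt : m' p < m p) : m' r = 0 := by
  -- column `p.1` carries the same weight in `m` and `m'`, so `m'` has a variable `v` strictly
  -- below `p` in that column, and `[v, r]` is then an inner interval
  have hlt' : m' p < m'.mapDomain (fun v => v.1.1) p.1.1 :=
    hcol ▸ hlt.trans_le (apply_le_mapDomain_apply _ m p)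
  obtain ⟨v, hv, hvp, hne⟩ := exists_ne_of_lt_mapDomain_apply hlt'
  have hvy : v.1.2 < y := by
    have := mt (htop v) hv
    have : v.1.2 ≠ y := fun h => hne (Subtype.ext (Prod.ext hvp (h.trans hp.symm)))
    omega
  by_contra hr0
  refine hm' v r ?_ (single_one_add_single_one_le ?_ hv hr0)
  · refine hs.innerInterval_of_mem_verts v.2 ?_ r.2 (by omega) (by omega)
    rw [hvp, hr, ← hp]
    exact p.2
  · exact fun h => by rw [h] at hvp; omega

theorem IsStandard.eq_on_top_row (hs : StackPolyomino P) {m m' : verts P →₀ ℕ}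
    (hm : IsStandard P m) (hm' : IsStandard P m') (hdeg : toricDegree m = toricDegree m')
    {y : ℕ} (htop : ∀ v : verts P, y < v.1.2 → m v = 0)
    (htop' : ∀ v : verts P, y < v.1.2 → m' v = 0) {v : verts P} (hv : v.1.2 = y) :
    m v = m' v := by
  simp only [toricDegree_apply, Prod.mk.injEq] at hdeg
  by_contra hne
  obtain ⟨p, hp, hlt⟩ := exists_lt_of_mapDomain_eq hdeg.2 hne
  obtain ⟨r, hr, hlt'⟩ := exists_lt_of_mapDomain_eq hdeg.2.symm (Ne.symm hne)
  rcases lt_trichotomy p.1.1 r.1.1 with h | h | h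
  · have := hm'.apply_eq_zero_of_lt hs hdeg.1 htop' (hp.trans hv) (hr.trans hv) h hlt
    omega
  · have : p = r := Subtype.ext (Prod.ext h (hp.trans hr.symm))
    subst this
    exact lt_asymm hlt hlt'
  · have := hm.apply_eq_zero_of_lt hs hdeg.1.symm htop (hr.trans hv) (hp.trans hv) h hlt'
    omega

theorem IsStandard.eq_of_toricDegree_eq_of_bounded (hs : StackPolyomino P) (y : ℕ) :
    ∀ {m m' : verts P →₀ ℕ}, IsStandard P m → IsStandard P m' →
      toricDegree m = toricDegree m' → (∀ v : verts P, y ≤ v.1.2 → m v = 0) →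
      (∀ v : verts P, y ≤ v.1.2 → m' v = 0) → m = m' := by
  classical
  induction y with
  | zero =>
    intro m m' _ _ _ h h'
    ext v
    rw [h v (Nat.zero_le _), h' v (Nat.zero_le _)]
  | succ y ih =>
    intro m m' hm hm' hdeg htop htop'
    have hrow : m.filter (·.1.2 = y) = m'.filter (·.1.2 = y) := by
      ext v
      simp only [filter_apply]
      split_ifs with hv
      exacts [hm.eq_on_top_row hs hm' hdeg htop htop' hv, rfl]
    have hrest : m.filter (¬ ·.1.2 = y) = m'.filter (¬ ·.1.2 = y) := by
      refine ih (hm.mono (le_add_self.trans_eq (filter_add_filter_not m _)))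
        (hm'.mono (le_add_self.trans_eq (filter_add_filter_not m' _))) ?_ ?_ ?_
      · rw [← filter_add_filter_not m (·.1.2 = y), ← filter_add_filter_not m' (·.1.2 = y),
          hrow, map_add, map_add] at hdeg
        exact add_left_cancel hdeg
      · intro v hv
        rw [filter_apply]
        split_ifs with h
        exacts [rfl, htop v (by omega)]
      · intro v hv
        rw [filter_apply]
        split_ifs with h
        exacts [rfl, htop' v (by omega)]
    rw [← filter_add_filter_not m (·.1.2 = y), ← filter_add_filter_not m' (·.1.2 = y), hrow,
      hrest]

theorem IsStandard.eq_of_toricDegree_eq (hs : StackPolyomino P) {m m' : verts P →₀ ℕ}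
    (hm : IsStandard P m) (hm' : IsStandard P m') (hdeg : toricDegree m = toricDegree m') :
    m = m' := by
  have hbound : ∀ v : verts P, ¬ (verts P).sup Prod.snd + 1 ≤ v.1.2 :=
    fun v => not_le.mpr (Nat.lt_succ_of_le (Finset.le_sup (f := Prod.snd) v.2))
  exact eq_of_toricDegree_eq_of_bounded hs _ hm hm' hdeg (fun v hv => absurd hv (hbound v))
    (fun v hv => absurd hv (hbound v))

theorem IsStandard.monKey_le (hs : StackPolyomino P) {m m' : verts P →₀ ℕ}
    (hm : IsStandard P m) (hdeg : toricDegree m' = toricDegree m) : monKey m ≤ monKey m' := by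
  obtain ⟨n, hn, hdegn, hkey⟩ := exists_isStandard_toricDegree_eq m'
  rwa [hn.eq_of_toricDegree_eq hs hm (hdegn.trans hdeg)] at hkey

end StandardMonomials

section InnerMinors

variable {K : Type*} [Field K]

theorem innerIdeal_le_ker_toricDegree :
    innerIdeal K P ≤
      RingHom.ker (AddMonoidAlgebra.mapDomainRingHom K (toricDegree (P := P))) := by
  refine Ideal.span_le.mpr ?_
  rintro _ ⟨a, b, c, d, -, hc, hd, rfl⟩
  rw [SetLike.mem_coe, RingHom.mem_ker, X_mul_X, X_mul_X, map_sub, ← single_eq_monomial,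
    ← single_eq_monomial,
    AddMonoidAlgebra.mapDomainRingHom_apply, AddMonoidAlgebra.mapDomainRingHom_apply,
    AddMonoidAlgebra.mapDomain_single, AddMonoidAlgebra.mapDomain_single,
    toricDegree_antidiagonal hc hd, sub_self]

theorem not_isStandard_of_isLeadMon (hs : StackPolyomino P) {f : MvPolynomial (verts P) K}
    (hf : f ∈ innerIdeal K P) {m : verts P →₀ ℕ} (hm : IsLeadMon f m) :
    ¬ IsStandard P m := by
  intro hstd
  obtain ⟨m', hm', hne, hdeg⟩ :=
    exists_ne_mem_support_of_mapDomain_eq_zero (innerIdeal_le_ker_toricDegree hf) hm.1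
  exact (monLt_iff_monKey_lt.mp (hm.2 m' hm' hne)).not_ge (hstd.monKey_le hs hdeg)

variable {a b c d : verts P}

theorem isLeadMon_minor (h1 : a.1.1 < b.1.1) (h2 : a.1.2 < b.1.2) (hc : c.1 = (b.1.1, a.1.2))
    (hd : d.1 = (a.1.1, b.1.2)) :
    IsLeadMon (X a * X b - X c * X d : MvPolynomial (verts P) K) (single a 1 + single b 1) := by
  rw [X_mul_X, X_mul_X]
  exact isLeadMon_monomial_sub_monomial (monLt_antidiagonal h1 h2 hc hd)

theorem coeff_minor (h1 : a.1.1 < b.1.1) (h2 : a.1.2 < b.1.2) (hc : c.1 = (b.1.1, a.1.2))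
    (hd : d.1 = (a.1.1, b.1.2)) :
    coeff (single a 1 + single b 1) (X a * X b - X c * X d : MvPolynomial (verts P) K) = 1 := by
  rw [X_mul_X, X_mul_X]
  exact coeff_monomial_sub_monomial_self (monLt_antidiagonal h1 h2 hc hd).ne

theorem totalDegree_minor (h1 : a.1.1 < b.1.1) (h2 : a.1.2 < b.1.2) (hc : c.1 = (b.1.1, a.1.2))
    (hd : d.1 = (a.1.1, b.1.2)) :
    (X a * X b - X c * X d : MvPolynomial (verts P) K).totalDegree = 2 := by
  refine (((isHomogeneous_X K a).mul (isHomogeneous_X K b)).sub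
    ((isHomogeneous_X K c).mul (isHomogeneous_X K d))).totalDegree fun h => ?_
  simpa [h] using (isLeadMon_minor (K := K) h1 h2 hc hd).1

theorem innerMinors_reduced : ∀ g ∈ innerMinors K P, ∀ g' ∈ innerMinors K P, g' ≠ g →
    ∀ m ∈ g.support, ∀ m', IsLeadMon g' m' → ¬ ∃ e, m = m' + e := by
  rintro _ ⟨a, b, c, d, ⟨h1, h2, -⟩, hc, hd, rfl⟩ _
    ⟨a', b', c', d', ⟨h1', h2', -⟩, hc', hd', rfl⟩ hne m hm m' hm' ⟨e, rfl⟩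
  obtain rfl := hm'.eq (isLeadMon_minor h1' h2' hc' hd')
  rw [X_mul_X, X_mul_X] at hm
  obtain rfl : e = 0 := by
    rcases eq_or_eq_of_mem_support_monomial_sub_monomial hm with h | h <;>
      exact (degree_eq_zero_iff e).mp (by simpa using congrArg Finsupp.degree h)
  rw [add_zero] at hm
  rcases eq_or_eq_of_mem_support_monomial_sub_monomial hm with h | h <;>
    rw [single_one_add_single_one_inj] at h <;> rcases h with ⟨rfl, rfl⟩ | ⟨rfl, rfl⟩
  · exact hne (by rw [Subtype.ext (hc'.trans hc.symm), Subtype.ext (hd'.trans hd.symm)])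
  · omega
  · simp only [hc, hd] at h1'
    omega
  · simp only [hc, hd] at h2'
    omega

theorem isGroebnerBasis_innerMinors (hs : StackPolyomino P) :
    IsGroebnerBasis (innerMinors K P) (innerIdeal K P) := by
  refine ⟨fun g hg => Ideal.subset_span hg, fun f hf hf0 => ?_⟩
  obtain ⟨m, hm⟩ := exists_isLeadMon hf0
  have hstd := not_isStandard_of_isLeadMon hs hf hm
  simp only [IsStandard, not_forall, not_not] at hstd
  obtain ⟨a, b, hab, hle⟩ := hstd
  exact ⟨X a * X b - X ⟨_, hab.lowerRight_mem_verts⟩ * X ⟨_, hab.upperLeft_mem_verts⟩,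
    ⟨a, b, _, _, hab, rfl, rfl, rfl⟩, _, m, isLeadMon_minor hab.1 hab.2.1 rfl rfl, hm, _,
    (add_tsub_cancel_of_le hle).symm⟩

end InnerMinors

end Polyomino

/-- For a stack polyomino `P`, the inner 2-minors of `P` form a reduced
quadratic Gröbner basis of `I_P` with respect to `<¹_lex`. -/
theorem stack_reduced_groebner (K : Type*) [Field K]
    (P : Finset Cell) (hs : StackPolyomino P) :
    IsReducedGroebnerBasis (innerMinors K P) (innerIdeal K P) ∧
      ∀ g ∈ innerMinors K P, MvPolynomial.totalDegree g = 2 := by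
  refine ⟨⟨isGroebnerBasis_innerMinors hs, ?_, innerMinors_reduced⟩, ?_⟩ <;>
    rintro g ⟨a, b, c, d, ⟨h1, h2, -⟩, hc, hd, rfl⟩
  · exact ⟨_, isLeadMon_minor h1 h2 hc hd, coeff_minor h1 h2 hc hd⟩
  · exact totalDegree_minor h1 h2 hc hd
end

section
/- Let P be a finite collection of cells. The set of inner 2-minors of P forms a reduced quadratic Gröbner basis of I_P with respect to the lexicographic order induced by x_{(i,j)} > x_{(k,l)} iff i > k, or i = k and j > l, if and only if for any two inner intervals [a,b] and [b,c] of P (with b the upper right corner of the first and lower left corner of the second), at least one of the intervals [e,c] or [d,c] is an inner interval of P, where d and e are the anti-diagonal corners of [a,b]. -/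
open scoped BigOperators

/-!
Reduce monomials by the rules `x_a x_b ⟶ x_e x_d`, one for each inner interval `[a,b]`. Each rule
lowers a monomial in `<¹_lex`, so reduction terminates, and every critical pair of two rules is
joinable; the only critical pair that needs the chain condition is the overlap `x_a x_b x_c` of two
chained intervals `[a,b]`, `[b,c]`. By Newman's lemma normal forms are unique, so the linear map
sending each monomial to its normal form vanishes on `I_P`. The leading coefficient of a nonzero
`f ∈ I_P` would survive this map if its leading monomial were irreducible; hence that monomial is
divisible by the leading term `x_a x_b` of an inner minor.

Conversely, `x_a f_{[b,c]} - x_c f_{[a,b]} = x_e x_d x_c - x_a x_{(c.1,b.2)} x_{(b.1,c.2)}` lies in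
`I_P` and has leading monomial `x_e x_d x_c`, which only the leading terms of the minors of `[e,c]`
and `[d,c]` can divide.
-/

namespace Relation

variable {α : Type*} {r : α → α → Prop}

theorem join_of_locallyConfluent (hwf : WellFounded (flip r))
    (hlc : ∀ ⦃a b c⦄, r a b → r a c → Join (ReflTransGen r) b c) {a b c : α}
    (hab : ReflTransGen r a b) (hac : ReflTransGen r a c) : Join (ReflTransGen r) b c := by
  induction a using hwf.induction generalizing b c with
  | _ a ih =>
  rcases hab.cases_head with rfl | ⟨b₁, hab₁, hb₁b⟩
  · exact ⟨c, hac, .refl⟩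
  rcases hac.cases_head with rfl | ⟨c₁, hac₁, hc₁c⟩
  · exact ⟨b, .refl, hab⟩
  obtain ⟨d, hb₁d, hc₁d⟩ := hlc hab₁ hac₁
  obtain ⟨e, hbe, hde⟩ := ih b₁ hab₁ hb₁b hb₁d
  obtain ⟨f, hcf, hef⟩ := ih c₁ hac₁ hc₁c (hc₁d.trans hde)
  exact ⟨f, hbe.trans hef, hcf⟩

theorem exists_normalForm (hwf : WellFounded (flip r)) (a : α) :
    ∃ n, ReflTransGen r a n ∧ ∀ b, ¬ r n b := by
  induction a using hwf.induction with
  | _ a ih =>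
  by_cases h : ∃ b, r a b
  · obtain ⟨b, hab⟩ := h
    obtain ⟨n, hbn, hn⟩ := ih b hab
    exact ⟨n, .head hab hbn, hn⟩
  · exact ⟨a, .refl, not_exists.1 h⟩

noncomputable def normalForm (hwf : WellFounded (flip r)) (a : α) : α :=
  (exists_normalForm hwf a).choose

theorem reflTransGen_normalForm (hwf : WellFounded (flip r)) (a : α) :
    ReflTransGen r a (normalForm hwf a) :=
  (exists_normalForm hwf a).choose_spec.1

theorem eq_of_reflTransGen_of_irreducible {a b : α} (ha : ∀ c, ¬ r a c)
    (hab : ReflTransGen r a b) : b = a := by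
  rcases hab.cases_head with rfl | ⟨c, hac, -⟩
  · rfl
  · exact absurd hac (ha c)

theorem normalForm_eq_self (hwf : WellFounded (flip r)) {a : α} (ha : ∀ b, ¬ r a b) :
    normalForm hwf a = a :=
  eq_of_reflTransGen_of_irreducible ha (reflTransGen_normalForm hwf a)

theorem normalForm_eq_of_rel (hwf : WellFounded (flip r))
    (hlc : ∀ ⦃a b c⦄, r a b → r a c → Join (ReflTransGen r) b c) {a b : α}
    (hab : r a b) : normalForm hwf a = normalForm hwf b := by
  have irred (x : α) : ∀ y, ¬ r (normalForm hwf x) y := (exists_normalForm hwf x).choose_spec.2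
  obtain ⟨c, hac, hbc⟩ := join_of_locallyConfluent hwf hlc (reflTransGen_normalForm hwf a)
    (.head hab (reflTransGen_normalForm hwf b))
  rw [← eq_of_reflTransGen_of_irreducible (irred a) hac,
    ← eq_of_reflTransGen_of_irreducible (irred b) hbc]

end Relation

namespace Polyomino

open Relation Finsupp MvPolynomial

variable {P : Finset Cell} {K : Type*} [Field K]

abbrev GridMon : Type := (ℕ × ℕ) →₀ ℕ

theorem _root_.InnerInterval.mono {a b x y : ℕ × ℕ} (h : InnerInterval P a b)
    (hx₁ : a.1 ≤ x.1) (hx₂ : a.2 ≤ x.2) (hy₁ : y.1 ≤ b.1) (hy₂ : y.2 ≤ b.2)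
    (hxy₁ : x.1 < y.1) (hxy₂ : x.2 < y.2) : InnerInterval P x y :=
  ⟨hxy₁, hxy₂, fun r s _ _ _ _ => h.2.2 r s (by omega) (by omega) (by omega) (by omega)⟩

theorem _root_.InnerInterval.append_right {a b c : ℕ × ℕ} (hab : InnerInterval P a b)
    (h : InnerInterval P (b.1, a.2) c) (hc : b.2 ≤ c.2) : InnerInterval P a (c.1, b.2) := by
  refine ⟨hab.1.trans h.1, hab.2.1, fun r s hr₁ hr₂ hs₁ hs₂ => ?_⟩
  by_cases hr : r < b.1
  · exact hab.2.2 r s hr₁ hr hs₁ hs₂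
  · exact h.2.2 r s (not_lt.1 hr) hr₂ hs₁ (by simp at hs₂ ⊢; omega)

theorem _root_.InnerInterval.append_top {a b c : ℕ × ℕ} (hab : InnerInterval P a b)
    (h : InnerInterval P (a.1, b.2) c) (hc : b.1 ≤ c.1) : InnerInterval P a (b.1, c.2) := by
  refine ⟨hab.1, hab.2.1.trans h.2.1, fun r s hr₁ hr₂ hs₁ hs₂ => ?_⟩
  by_cases hs : s < b.2
  · exact hab.2.2 r s hr₁ hr₂ hs₁ hs
  · exact h.2.2 r s hr₁ (by simp at hr₂ ⊢; omega) (not_lt.1 hs) hs₂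

theorem _root_.InnerInterval.mem_verts {a b : ℕ × ℕ} (h : InnerInterval P a b) {p : ℕ × ℕ}
    (hp₁ : a.1 ≤ p.1 ∧ p.1 ≤ b.1) (hp₂ : a.2 ≤ p.2 ∧ p.2 ≤ b.2) :
    p ∈ verts P := by
  have := h.1; have := h.2.1
  refine Finset.mem_biUnion.2 ⟨(min p.1 (b.1 - 1), min p.2 (b.2 - 1)),
    h.2.2 _ _ (by omega) (by omega) (by omega) (by omega), ?_⟩
  simp only [cellVerts, Finset.mem_insert, Finset.mem_singleton, Prod.ext_iff]
  omega

theorem varGt_iff_toLex_lt {a b : ℕ × ℕ} : varGt a b ↔ toLex b < toLex a := by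
  rw [Prod.Lex.toLex_lt_toLex, varGt]
  omega

theorem varGt_trichotomous (a b : ℕ × ℕ) : varGt a b ∨ a = b ∨ varGt b a := by
  rw [varGt_iff_toLex_lt, varGt_iff_toLex_lt, ← toLex_inj]
  rcases lt_trichotomy (toLex a) (toLex b) with h | h | h <;> simp [h]

/-- `<¹_lex` on monomials in the variables `x_v`, `v ∈ ℕ²`, is the colex order on exponent
vectors indexed by `ℕ ×ₗ ℕ`. -/
def colexKey (m : GridMon) : Colex (Lex (ℕ × ℕ) →₀ ℕ) :=
  toColex (m.equivMapDomain toLex)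

theorem colexKey_lt_iff {m m' : GridMon} :
    colexKey m < colexKey m' ↔ ∃ t, m t < m' t ∧ ∀ x, varGt x t → m x = m' x := by
  simp only [colexKey, Colex.lt_iff, ofColex_toColex, equivMapDomain_apply]
  constructor
  · rintro ⟨t, habove, hlt⟩
    exact ⟨ofLex t, hlt, fun x hx => habove (toLex x) (varGt_iff_toLex_lt.1 hx)⟩
  · rintro ⟨t, hlt, habove⟩
    exact ⟨toLex t, fun x hx => habove (ofLex x) (varGt_iff_toLex_lt.2 hx), hlt⟩

theorem colexKey_injective : Function.Injective colexKey :=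
  fun _ _ h => (equivCongrLeft toLex).injective (toColex.injective h)

def IsBelow (t : ℕ × ℕ) (m : GridMon) : Prop := ∀ x, m x ≠ 0 → varGt t x

theorem isBelow_single {t x : ℕ × ℕ} (h : varGt t x) (n : ℕ) : IsBelow t (single x n) :=
  fun _ hy => (single_apply_ne_zero.1 hy).1 ▸ h

theorem IsBelow.add {t : ℕ × ℕ} {m m' : GridMon} (hm : IsBelow t m) (hm' : IsBelow t m') :
    IsBelow t (m + m') := by
  intro x hx
  by_cases h : m x = 0
  · exact hm' x (by simpa [h] using hx)
  · exact hm x h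

theorem colexKey_add_lt {t : ℕ × ℕ} {u m m' : GridMon} (hm : IsBelow t m)
    (hm' : IsBelow t m') : colexKey (u + m') < colexKey (u + (m + single t 1)) := by
  have vanish {n : GridMon} (hn : IsBelow t n) (x : ℕ × ℕ) (hx : ¬ varGt t x) : n x = 0 :=
    not_imp_comm.1 (hn x) hx
  have irrefl : ¬ varGt t t := by simp [varGt]
  refine colexKey_lt_iff.2
    ⟨t, by simp [vanish hm t irrefl, vanish hm' t irrefl], fun x hx => ?_⟩
  have hx' : ¬ varGt t x := by simp only [varGt] at hx ⊢; omega
  have htx : t ≠ x := by rintro rfl; exact irrefl hx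
  simp [vanish hm x hx', vanish hm' x hx', htx]

noncomputable def diagMon (a b : ℕ × ℕ) : GridMon := single a 1 + single b 1

noncomputable def antiDiagMon (a b : ℕ × ℕ) : GridMon :=
  single (b.1, a.2) 1 + single (a.1, b.2) 1

theorem colexKey_add_antiDiagMon_lt {a b : ℕ × ℕ} (h : a.1 < b.1) (h' : a.2 < b.2)
    (u : GridMon) : colexKey (u + antiDiagMon a b) < colexKey (u + diagMon a b) :=
  colexKey_add_lt (t := b) (isBelow_single (Or.inl h) 1)
    ((isBelow_single (t := b) (x := (b.1, a.2)) (Or.inr ⟨rfl, h'⟩) 1).add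
      (isBelow_single (t := b) (x := (a.1, b.2)) (Or.inl h) 1))

def InnerStep (P : Finset Cell) (m m' : GridMon) : Prop :=
  ∃ u a b, InnerInterval P a b ∧ m = u + diagMon a b ∧ m' = u + antiDiagMon a b

theorem InnerStep.colexKey_lt {m m' : GridMon} (h : InnerStep P m m') :
    colexKey m' < colexKey m := by
  obtain ⟨u, a, b, hab, rfl, rfl⟩ := h
  exact colexKey_add_antiDiagMon_lt hab.1 hab.2.1 u

theorem innerStep_wellFounded (P : Finset Cell) : WellFounded (flip (InnerStep P)) :=
  Subrelation.wf (fun h => h.colexKey_lt) (InvImage.wf colexKey wellFounded_lt)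

theorem colexKey_le_of_reflTransGen {m m' : GridMon} (h : ReflTransGen (InnerStep P) m m') :
    colexKey m' ≤ colexKey m := by
  induction h with
  | refl => exact le_rfl
  | tail _ hstep ih => exact hstep.colexKey_lt.le.trans ih

theorem InnerStep.add_left {m m' : GridMon} (h : InnerStep P m m') (w : GridMon) :
    InnerStep P (w + m) (w + m') := by
  obtain ⟨u, a, b, hab, rfl, rfl⟩ := h
  exact ⟨w + u, a, b, hab, (add_assoc _ _ _).symm, (add_assoc _ _ _).symm⟩

local notation "Joinable" P => Join (ReflTransGen (InnerStep P))

theorem join_add_left {m m' : GridMon} (w : GridMon) (h : (Joinable P) m m') :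
    (Joinable P) (w + m) (w + m') := by
  obtain ⟨n, hm, hm'⟩ := h
  exact ⟨w + n, hm.lift _ fun _ _ hs => hs.add_left w, hm'.lift _ fun _ _ hs => hs.add_left w⟩

theorem joinable_same_lower_of_varGt {a b c : ℕ × ℕ} (hab : InnerInterval P a b)
    (hac : InnerInterval P a c) (hcb : varGt c b) :
    (Joinable P) (single c 1 + antiDiagMon a b) (single b 1 + antiDiagMon a c) := by
  obtain ⟨a1, a2⟩ := a
  obtain ⟨b1, b2⟩ := b
  obtain ⟨c1, c2⟩ := c
  have := hab.1; have := hab.2.1; have := hac.1; have := hac.2.1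
  simp only [varGt] at hcb
  rcases hcb with hb1 | ⟨hb1, hb2⟩
  · have h₁ : InnerInterval P (b1, a2) (c1, c2) :=
      hac.mono (by simp; omega) le_rfl le_rfl le_rfl (by simp; omega) (by simp; omega)
    rcases lt_trichotomy b2 c2 with hb2 | rfl | hb2
    · have h₂ : InnerInterval P (a1, b2) (b1, c2) :=
        hac.mono le_rfl (by simp; omega) (by simp; omega) le_rfl (by simp; omega) (by simp; omega)
      refine ⟨_, .head ⟨single (a1, b2) 1, _, _, h₁, ?_, rfl⟩
        (.single ⟨single (c1, a2) 1, _, _, h₂, ?_, ?_⟩), .refl⟩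
      all_goals simp only [diagMon, antiDiagMon]; abel
    · refine ⟨_, .single ⟨single (a1, b2) 1, _, _, h₁, ?_, ?_⟩, .refl⟩
      all_goals simp only [diagMon, antiDiagMon]; abel
    · have h₂ : InnerInterval P (a1, c2) (b1, b2) :=
        hab.mono le_rfl (by simp; omega) le_rfl le_rfl (by simp; omega) (by simp; omega)
      refine ⟨_, .single ⟨single (a1, b2) 1, _, _, h₁, ?_, rfl⟩,
        .single ⟨single (c1, a2) 1, _, _, h₂, ?_, ?_⟩⟩
      all_goals simp only [diagMon, antiDiagMon]; abel
  · subst c1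
    have h₁ : InnerInterval P (a1, b2) (b1, c2) :=
      hac.mono le_rfl (by simp; omega) le_rfl le_rfl (by simp; omega) (by simp; omega)
    refine ⟨_, .single ⟨single (b1, a2) 1, _, _, h₁, ?_, ?_⟩, .refl⟩
    all_goals simp only [diagMon, antiDiagMon]; abel

theorem joinable_same_upper_of_varGt {a e b : ℕ × ℕ} (hab : InnerInterval P a b)
    (heb : InnerInterval P e b) (hea : varGt e a) :
    (Joinable P) (single e 1 + antiDiagMon a b) (single a 1 + antiDiagMon e b) := by
  obtain ⟨a1, a2⟩ := a
  obtain ⟨e1, e2⟩ := e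
  obtain ⟨b1, b2⟩ := b
  have := hab.1; have := hab.2.1; have := heb.1; have := heb.2.1
  simp only [varGt] at hea
  rcases hea with ha1 | ⟨he1, ha2⟩
  · rcases lt_trichotomy a2 e2 with ha2 | rfl | ha2
    · have h₁ : InnerInterval P (a1, a2) (b1, e2) :=
        hab.mono le_rfl le_rfl le_rfl (by simp; omega) (by simp; omega) (by simp; omega)
      have h₂ : InnerInterval P (a1, e2) (e1, b2) :=
        hab.mono le_rfl (by simp; omega) (by simp; omega) le_rfl (by simp; omega) (by simp; omega)
      refine ⟨_, .refl, .head ⟨single (e1, b2) 1, _, _, h₁, ?_, rfl⟩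
        (.single ⟨single (b1, a2) 1, _, _, h₂, ?_, ?_⟩)⟩
      all_goals simp only [diagMon, antiDiagMon]; abel
    · have h₁ : InnerInterval P (a1, a2) (e1, b2) :=
        hab.mono le_rfl le_rfl (by simp; omega) le_rfl (by simp; omega) (by simp; omega)
      refine ⟨_, .refl, .single ⟨single (b1, a2) 1, _, _, h₁, ?_, ?_⟩⟩
      all_goals simp only [diagMon, antiDiagMon]; abel
    · have h₁ : InnerInterval P (e1, e2) (b1, a2) :=
        heb.mono le_rfl le_rfl le_rfl (by simp; omega) (by simp; omega) (by simp; omega)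
      have h₂ : InnerInterval P (a1, a2) (e1, b2) :=
        hab.mono le_rfl le_rfl (by simp; omega) le_rfl (by simp; omega) (by simp; omega)
      refine ⟨_, .single ⟨single (a1, b2) 1, _, _, h₁, ?_, rfl⟩,
        .single ⟨single (b1, e2) 1, _, _, h₂, ?_, ?_⟩⟩
      all_goals simp only [diagMon, antiDiagMon]; abel
  · subst e1
    have h₁ : InnerInterval P (a1, a2) (b1, e2) :=
      hab.mono le_rfl le_rfl le_rfl (by simp; omega) (by simp; omega) (by simp; omega)
    refine ⟨_, .refl, .single ⟨single (a1, b2) 1, _, _, h₁, ?_, ?_⟩⟩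
    all_goals simp only [diagMon, antiDiagMon]; abel

theorem joinable_same_lower {a b c : ℕ × ℕ} (hab : InnerInterval P a b)
    (hac : InnerInterval P a c) :
    (Joinable P) (single c 1 + antiDiagMon a b) (single b 1 + antiDiagMon a c) := by
  rcases varGt_trichotomous c b with hcb | rfl | hbc
  · exact joinable_same_lower_of_varGt hab hac hcb
  · exact ⟨_, .refl, .refl⟩
  · exact symm_of _ (joinable_same_lower_of_varGt hac hab hbc)

theorem joinable_same_upper {a e b : ℕ × ℕ} (hab : InnerInterval P a b)
    (heb : InnerInterval P e b) :
    (Joinable P) (single e 1 + antiDiagMon a b) (single a 1 + antiDiagMon e b) := by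
  rcases varGt_trichotomous e a with hea | rfl | hae
  · exact joinable_same_upper_of_varGt hab heb hea
  · exact ⟨_, .refl, .refl⟩
  · exact symm_of _ (joinable_same_upper_of_varGt heb hab hae)

def ChainCondition (P : Finset Cell) : Prop :=
  ∀ a b c : ℕ × ℕ, InnerInterval P a b → InnerInterval P b c →
    InnerInterval P (b.1, a.2) c ∨ InnerInterval P (a.1, b.2) c

theorem joinable_chain (H : ChainCondition P) {a b c : ℕ × ℕ} (hab : InnerInterval P a b)
    (hbc : InnerInterval P b c) :
    (Joinable P) (single c 1 + antiDiagMon a b) (single a 1 + antiDiagMon b c) := by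
  rcases H a b c hab hbc with h | h
  · refine ⟨_, .single ⟨single (a.1, b.2) 1, _, _, h, ?_, rfl⟩,
      .single ⟨single (b.1, c.2) 1, _, _, hab.append_right h hbc.2.1.le, ?_, ?_⟩⟩
    all_goals simp only [diagMon, antiDiagMon]; abel
  · refine ⟨_, .single ⟨single (b.1, a.2) 1, _, _, h, ?_, rfl⟩,
      .single ⟨single (c.1, b.2) 1, _, _, hab.append_top h hbc.1.le, ?_, ?_⟩⟩
    all_goals simp only [diagMon, antiDiagMon]; abel

theorem exists_eq_add_single_of_add_single_eq {α : Type*} {u u' : α →₀ ℕ} {x y : α}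
    (h : u + single x 1 = u' + single y 1) (hxy : x ≠ y) :
    ∃ w, u = w + single y 1 ∧ u' = w + single x 1 := by
  have hy : single y 1 ≤ u := by
    have := DFunLike.congr_fun h y
    simp only [Finsupp.add_apply, single_eq_same, single_eq_of_ne' hxy] at this
    exact single_le_iff.2 (by omega)
  obtain ⟨w, rfl⟩ := exists_add_of_le hy
  refine ⟨w, add_comm _ _, add_right_cancel (b := single y 1) ?_⟩
  rw [← h]
  abel

theorem innerStep_locallyConfluent (H : ChainCondition P) ⦃m p q : GridMon⦄
    (hp : InnerStep P m p) (hq : InnerStep P m q) : (Joinable P) p q := by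
  obtain ⟨u, a, b, hab, rfl, rfl⟩ := hp
  obtain ⟨u', a', b', hab', hm, rfl⟩ := hq
  simp only [diagMon, ← add_assoc] at hm
  -- the pairs `{a, b}`, `{a', b'}` coincide, share `b`, have `a = b'`, share `a`, have `a' = b`,
  -- or are disjoint
  by_cases hbb' : b = b'
  · subst hbb'
    have h := add_right_cancel hm
    by_cases haa' : a = a'
    · subst haa'
      rw [add_right_cancel h]
      exact ⟨_, .refl, .refl⟩
    obtain ⟨w, rfl, rfl⟩ := exists_eq_add_single_of_add_single_eq h haa'
    convert join_add_left w (joinable_same_upper hab hab') using 1 <;> abel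
  obtain ⟨w₁, hw₁, hw₁'⟩ := exists_eq_add_single_of_add_single_eq hm hbb'
  by_cases hab'' : a = b'
  · subst hab''
    obtain rfl := add_right_cancel hw₁
    have ha'b : a' ≠ b := by
      rintro rfl
      have := hab.1; have := hab'.1
      omega
    obtain ⟨w, rfl, rfl⟩ := exists_eq_add_single_of_add_single_eq hw₁' ha'b
    convert join_add_left w (symm_of _ (joinable_chain H hab' hab)) using 1 <;> abel
  obtain ⟨w₂, rfl, rfl⟩ := exists_eq_add_single_of_add_single_eq hw₁ hab''
  by_cases ha'a : a' = a
  · subst ha'a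
    rw [add_right_comm] at hw₁'
    obtain rfl := add_right_cancel hw₁'
    convert join_add_left w₂ (joinable_same_lower hab hab') using 1 <;> abel
  by_cases ha'b : a' = b
  · subst ha'b
    obtain rfl := add_right_cancel hw₁'
    convert join_add_left w₂ (joinable_chain H hab hab') using 1 <;> abel
  obtain ⟨w₃, rfl, hw₃⟩ := exists_eq_add_single_of_add_single_eq hw₁' ha'b
  obtain ⟨w₄, rfl, rfl⟩ := exists_eq_add_single_of_add_single_eq hw₃ (Ne.symm ha'a)
  refine ⟨w₄ + antiDiagMon a b + antiDiagMon a' b',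
    .single ⟨w₄ + antiDiagMon a b, a', b', hab', ?_, rfl⟩,
    .single ⟨w₄ + antiDiagMon a' b', a, b, hab, ?_, by abel⟩⟩
  all_goals simp only [diagMon]; abel

abbrev Vertex (P : Finset Cell) : Type := {v : ℕ × ℕ // v ∈ verts P}

noncomputable def toGrid (m : Vertex P →₀ ℕ) : GridMon := m.mapDomain Subtype.val

theorem toGrid_apply (m : Vertex P →₀ ℕ) (v : Vertex P) : toGrid m v.1 = m v :=
  mapDomain_apply Subtype.val_injective m v

theorem toGrid_apply_of_notMem (m : Vertex P →₀ ℕ) {x : ℕ × ℕ} (hx : x ∉ verts P) :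
    toGrid m x = 0 :=
  mapDomain_of_notMem_range _ _ (by simpa using hx)

theorem toGrid_injective : Function.Injective (toGrid (P := P)) :=
  mapDomain_injective Subtype.val_injective

theorem toGrid_mono : Monotone (toGrid (P := P)) :=
  mapDomain_mono

theorem toGrid_add (m m' : Vertex P →₀ ℕ) : toGrid (m + m') = toGrid m + toGrid m' :=
  mapDomain_add

theorem toGrid_single (v : Vertex P) (n : ℕ) : toGrid (single v n) = single v.1 n :=
  mapDomain_single

theorem monLt_iff {m m' : Vertex P →₀ ℕ} :
    monLt m m' ↔ colexKey (toGrid m) < colexKey (toGrid m') := by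
  rw [colexKey_lt_iff]
  constructor
  · rintro ⟨a, hlt, habove⟩
    refine ⟨a.1, by simpa only [toGrid_apply] using hlt, fun x hx => ?_⟩
    by_cases hxv : x ∈ verts P
    · exact (toGrid_apply m ⟨x, hxv⟩).trans <|
        (habove ⟨x, hxv⟩ hx).trans (toGrid_apply m' ⟨x, hxv⟩).symm
    · simp only [toGrid_apply_of_notMem _ hxv]
  · rintro ⟨t, hlt, habove⟩
    have ht : t ∈ verts P := by
      by_contra ht
      simp [toGrid_apply_of_notMem _ ht] at hlt
    exact ⟨⟨t, ht⟩, by rw [← toGrid_apply, ← toGrid_apply]; exact hlt,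
      fun b hb => by simpa only [toGrid_apply] using habove b.1 hb⟩

theorem _root_.monLt.ne' {m m' : Vertex P →₀ ℕ} (h : monLt m m') : m' ≠ m := by
  rintro rfl
  exact lt_irrefl _ (monLt_iff.1 h)

theorem exists_isLeadMon {f : MvPolynomial (Vertex P) K} (hf : f ≠ 0) : ∃ m, IsLeadMon f m := by
  obtain ⟨m, hm, hmax⟩ :=
    f.support.exists_max_image (colexKey ∘ toGrid) (support_nonempty.2 hf)
  refine ⟨m, hm, fun m' hm' hne => monLt_iff.2 ((hmax m' hm').lt_of_ne fun h => hne ?_)⟩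
  exact toGrid_injective (colexKey_injective h)

theorem _root_.IsLeadMon.unique {f : MvPolynomial (Vertex P) K} {m m' : Vertex P →₀ ℕ}
    (h : IsLeadMon f m) (h' : IsLeadMon f m') : m = m' := by
  by_contra hne
  exact lt_asymm (monLt_iff.1 (h.2 m' h'.1 (Ne.symm hne))) (monLt_iff.1 (h'.2 m h.1 hne))

theorem support_monomial_sub_monomial {σ : Type*} [DecidableEq σ] {m m' : σ →₀ ℕ} (h : m ≠ m') :
    (monomial m (1 : K) - monomial m' 1).support = {m, m'} := by
  ext n
  by_cases h₁ : n = m <;> by_cases h₂ : n = m' <;> simp_all [coeff_monomial, eq_comm]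

theorem isLeadMon_monomial_sub_monomial {m m' : Vertex P →₀ ℕ} (h : monLt m' m) :
    IsLeadMon (monomial m (1 : K) - monomial m' 1) m := by
  rw [IsLeadMon, support_monomial_sub_monomial h.ne']
  simp only [Finset.mem_insert, Finset.mem_singleton, true_or, forall_eq_or_imp, forall_eq,
    true_and]
  exact ⟨fun h' => absurd rfl h', fun _ => h⟩

theorem eq_or_eq_of_single_le {α : Type*} {w x y : α}
    (h : single w 1 ≤ single x 1 + single y 1) : w = x ∨ w = y := by
  rw [single_le_iff] at h
  by_contra! hw
  simp [hw.1.symm, hw.2.symm] at h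

theorem eq_or_eq_or_eq_of_single_le {α : Type*} {w x y z : α}
    (h : single w 1 ≤ single x 1 + single y 1 + single z 1) : w = x ∨ w = y ∨ w = z := by
  rw [single_le_iff] at h
  by_contra! hw
  simp [hw.1.symm, hw.2.1.symm, hw.2.2.symm] at h

theorem le_of_toGrid_le {m m' : Vertex P →₀ ℕ} (h : toGrid m ≤ toGrid m') : m ≤ m' :=
  fun v => by simpa only [toGrid_apply] using h v.1

theorem X_mul_X_sub_X_mul_X (A B C D : Vertex P) :
    (X A * X B - X C * X D : MvPolynomial (Vertex P) K) =
      monomial (single A 1 + single B 1) 1 - monomial (single C 1 + single D 1) 1 := by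
  simp only [X, monomial_mul, one_mul]

theorem monLt_antiDiag_diag {A B C D : Vertex P} (hAB : InnerInterval P A.1 B.1)
    (hC : C.1 = (B.1.1, A.1.2)) (hD : D.1 = (A.1.1, B.1.2)) :
    monLt (single C 1 + single D 1) (single A 1 + single B 1) := by
  rw [monLt_iff]
  simpa [toGrid_add, toGrid_single, hC, hD, diagMon, antiDiagMon] using
    colexKey_add_antiDiagMon_lt hAB.1 hAB.2.1 0

theorem isLeadMon_innerMinor {A B C D : Vertex P} (hAB : InnerInterval P A.1 B.1)
    (hC : C.1 = (B.1.1, A.1.2)) (hD : D.1 = (A.1.1, B.1.2)) :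
    IsLeadMon (X A * X B - X C * X D : MvPolynomial (Vertex P) K) (single A 1 + single B 1) := by
  rw [X_mul_X_sub_X_mul_X]
  exact isLeadMon_monomial_sub_monomial (monLt_antiDiag_diag hAB hC hD)

theorem totalDegree_innerMinor {A B C D : Vertex P} (hAB : InnerInterval P A.1 B.1)
    (hC : C.1 = (B.1.1, A.1.2)) (hD : D.1 = (A.1.1, B.1.2)) :
    (X A * X B - X C * X D : MvPolynomial (Vertex P) K).totalDegree = 2 := by
  rw [X_mul_X_sub_X_mul_X, totalDegree,
    support_monomial_sub_monomial (monLt_antiDiag_diag hAB hC hD).ne']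
  simp [sum_add_index']

variable (P K) in
noncomputable def normalFormMap : MvPolynomial (Vertex P) K →ₗ[K] GridMon →₀ K :=
  lmapDomain K K (normalForm (innerStep_wellFounded P) ∘ toGrid) ∘ₗ
    (AddMonoidAlgebra.coeffLinearEquiv K).toLinearMap

theorem normalFormMap_monomial (m : Vertex P →₀ ℕ) (c : K) :
    normalFormMap P K (monomial m c) =
      single (normalForm (innerStep_wellFounded P) (toGrid m)) c := by
  simp only [normalFormMap, LinearMap.coe_comp, LinearEquiv.coe_coe, Function.comp_apply,
    AddMonoidAlgebra.coeffLinearEquiv_apply, lmapDomain_apply]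
  exact mapDomain_single

theorem normalFormMap_mul_innerMinor (H : ChainCondition P) {A B C D : Vertex P} (hAB : InnerInterval P A.1 B.1) (hC : C.1 = (B.1.1, A.1.2))
    (hD : D.1 = (A.1.1, B.1.2)) (p : MvPolynomial (Vertex P) K) :
    normalFormMap P K (p * (X A * X B - X C * X D)) = 0 := by
  induction p using MvPolynomial.induction_on' with
  | add p q hp hq => rw [add_mul, map_add, hp, hq, add_zero]
  | monomial u c =>
    have hstep : InnerStep P (toGrid (u + (single A 1 + single B 1)))
        (toGrid (u + (single C 1 + single D 1))) :=
      ⟨toGrid u, A.1, B.1, hAB, by simp [toGrid_add, toGrid_single, diagMon],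
        by simp [toGrid_add, toGrid_single, antiDiagMon, hC, hD]⟩
    rw [X_mul_X_sub_X_mul_X, mul_sub, monomial_mul, monomial_mul, map_sub,
      normalFormMap_monomial, normalFormMap_monomial,
      normalForm_eq_of_rel _ (innerStep_locallyConfluent H) hstep, sub_self]

theorem normalFormMap_eq_zero (H : ChainCondition P) {f : MvPolynomial (Vertex P) K}
    (hf : f ∈ innerIdeal K P) : normalFormMap P K f = 0 := by
  suffices ∀ p, normalFormMap P K (p * f) = 0 by simpa using this 1
  induction hf using Submodule.span_induction with
  | mem g hg =>
    obtain ⟨A, B, C, D, hAB, hC, hD, rfl⟩ := hg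
    exact normalFormMap_mul_innerMinor H hAB hC hD
  | zero => simp
  | add f g _ _ hf hg => intro p; rw [mul_add, map_add, hf, hg, add_zero]
  | smul q f _ hf => intro p; rw [smul_eq_mul, ← mul_assoc, hf]

theorem normalFormMap_apply_of_isLeadMon {f : MvPolynomial (Vertex P) K} {mf : Vertex P →₀ ℕ}
    (hmf : IsLeadMon f mf) (hirr : ∀ m', ¬ InnerStep P (toGrid mf) m') :
    normalFormMap P K f (toGrid mf) = coeff mf f := by
  conv_lhs => rw [f.as_sum]
  rw [map_sum, Finsupp.finsetSum_apply, Finset.sum_eq_single mf]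
  · simp [normalFormMap_monomial, normalForm_eq_self _ hirr]
  · intro m hm hne
    rw [normalFormMap_monomial, single_eq_of_ne']
    intro heq
    have hle := colexKey_le_of_reflTransGen
      (reflTransGen_normalForm (innerStep_wellFounded P) (toGrid m))
    rw [heq] at hle
    exact (monLt_iff.1 (hmf.2 m hm hne)).not_ge hle
  · exact fun h => absurd hmf.1 h

theorem exists_innerStep_of_isLeadMon (H : ChainCondition P) {f : MvPolynomial (Vertex P) K} (hf : f ∈ innerIdeal K P) {mf : Vertex P →₀ ℕ}
    (hmf : IsLeadMon f mf) : ∃ m', InnerStep P (toGrid mf) m' := by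
  by_contra! hirr
  have := normalFormMap_apply_of_isLeadMon hmf hirr
  rw [normalFormMap_eq_zero H hf] at this
  exact MvPolynomial.mem_support_iff.1 hmf.1 this.symm

theorem isGroebnerBasis_innerMinors (H : ChainCondition P) :
    IsGroebnerBasis (innerMinors K P) (innerIdeal K P) := by
  refine ⟨fun g hg => Ideal.subset_span hg, fun f hf hf0 => ?_⟩
  obtain ⟨mf, hmf⟩ := exists_isLeadMon hf0
  obtain ⟨-, u, a, b, hab, hmf_eq, -⟩ := exists_innerStep_of_isLeadMon H hf hmf
  have := hab.1; have := hab.2.1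
  let A : Vertex P := ⟨a, hab.mem_verts (by omega) (by omega)⟩
  let B : Vertex P := ⟨b, hab.mem_verts (by omega) (by omega)⟩
  let C : Vertex P := ⟨(b.1, a.2), hab.mem_verts (by simp; omega) (by simp; omega)⟩
  let D : Vertex P := ⟨(a.1, b.2), hab.mem_verts (by simp; omega) (by simp; omega)⟩
  have hle : single A 1 + single B 1 ≤ mf := le_of_toGrid_le <| by
    simpa [hmf_eq, toGrid_add, toGrid_single, diagMon] using le_add_self
  obtain ⟨d, hd⟩ := exists_add_of_le hle
  exact ⟨_, ⟨A, B, C, D, hab, rfl, rfl, rfl⟩, _, mf, isLeadMon_innerMinor hab rfl rfl, hmf, d,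
    hd⟩

theorem innerMinors_reduced (g : MvPolynomial (Vertex P) K) (hg : g ∈ innerMinors K P)
    (g' : MvPolynomial (Vertex P) K) (hg' : g' ∈ innerMinors K P) (hne : g' ≠ g)
    (m : Vertex P →₀ ℕ) (hm : m ∈ g.support) (m' : Vertex P →₀ ℕ)
    (hm' : IsLeadMon g' m') :
    ¬ ∃ d, m = m' + d := by
  obtain ⟨A, B, C, D, hAB, hC, hD, rfl⟩ := hg
  obtain ⟨A', B', C', D', hAB', hC', hD', rfl⟩ := hg'
  rintro ⟨d, rfl⟩
  obtain rfl := hm'.unique (isLeadMon_innerMinor hAB' hC' hD')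
  have hA' : single A' 1 ≤ single A' 1 + single B' 1 + d := le_add_right le_self_add
  have hB' : single B' 1 ≤ single A' 1 + single B' 1 + d := le_add_right le_add_self
  rw [X_mul_X_sub_X_mul_X, support_monomial_sub_monomial (monLt_antiDiag_diag hAB hC hD).ne',
    Finset.mem_insert, Finset.mem_singleton] at hm
  have := hAB.1; have := hAB.2.1; have h₁ := hAB'.1; have h₂ := hAB'.2.1
  rcases hm with hm | hm <;> rw [hm] at hA' hB'
  · obtain ⟨rfl, rfl⟩ : A' = A ∧ B' = B := by
      rcases eq_or_eq_of_single_le hA' with rfl | rfl <;>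
        rcases eq_or_eq_of_single_le hB' with rfl | rfl <;> first | exact ⟨rfl, rfl⟩ | omega
    exact hne (by rw [Subtype.ext (hC'.trans hC.symm), Subtype.ext (hD'.trans hD.symm)])
  · rcases eq_or_eq_of_single_le hA' with rfl | rfl <;>
      rcases eq_or_eq_of_single_le hB' with rfl | rfl <;>
      simp only [hC, hD, lt_self_iff_false] at h₁ h₂ <;> omega

/-- The S-polynomial of the minors of `[a,b]` and `[b,c]`. -/
theorem exists_isLeadMon_of_chain {a b c : ℕ × ℕ} (hab : InnerInterval P a b)
    (hbc : InnerInterval P b c) : ∃ f ∈ innerIdeal K P, ∃ mf, IsLeadMon f mf ∧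
      toGrid mf = single (b.1, a.2) 1 + single (a.1, b.2) 1 + single c 1 := by
  have hab₁ := hab.1; have hab₂ := hab.2.1; have hbc₁ := hbc.1; have hbc₂ := hbc.2.1
  let A : Vertex P := ⟨a, hab.mem_verts (by omega) (by omega)⟩
  let B : Vertex P := ⟨b, hab.mem_verts (by omega) (by omega)⟩
  let C : Vertex P := ⟨c, hbc.mem_verts (by omega) (by omega)⟩
  let E : Vertex P := ⟨(b.1, a.2), hab.mem_verts (by simp; omega) (by simp; omega)⟩
  let D : Vertex P := ⟨(a.1, b.2), hab.mem_verts (by simp; omega) (by simp; omega)⟩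
  let E' : Vertex P := ⟨(c.1, b.2), hbc.mem_verts (by simp; omega) (by simp; omega)⟩
  let D' : Vertex P := ⟨(b.1, c.2), hbc.mem_verts (by simp; omega) (by simp; omega)⟩
  have hf : X A * (X B * X C - X E' * X D') - X C * (X A * X B - X E * X D) =
      monomial (single E 1 + single D 1 + single C 1) (1 : K) -
        monomial (single A 1 + single E' 1 + single D' 1) 1 := by
    rw [show X A * (X B * X C - X E' * X D') - X C * (X A * X B - X E * X D) =
      X E * X D * X C - X A * X E' * (X D' : MvPolynomial (Vertex P) K) by ring]
    simp only [X, monomial_mul, one_mul]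
  have below (x : ℕ × ℕ) (hx : varGt c x) : IsBelow c (single x 1) := isBelow_single hx 1
  have hlt :
      monLt (single A 1 + single E' 1 + single D' 1) (single E 1 + single D 1 + single C 1) := by
    rw [monLt_iff]
    simpa [toGrid_add, toGrid_single] using colexKey_add_lt (u := 0) (t := c)
      ((below (b.1, a.2) (by simp only [varGt]; omega)).add
        (below (a.1, b.2) (by simp only [varGt]; omega)))
      (((below a (by simp only [varGt]; omega)).add (below (c.1, b.2) (.inr ⟨rfl, hbc₂⟩))).add
        (below (b.1, c.2) (by simp only [varGt]; omega)))
  refine ⟨_, sub_mem (Ideal.mul_mem_left _ _ (Ideal.subset_span ⟨B, C, E', D', hbc, rfl, rfl, rfl⟩))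
    (Ideal.mul_mem_left _ _ (Ideal.subset_span ⟨A, B, E, D, hab, rfl, rfl, rfl⟩)), _,
    hf ▸ isLeadMon_monomial_sub_monomial hlt, by simp [toGrid_add, toGrid_single, E, D, C]⟩

theorem chainCondition_of_isGroebnerBasis
    (hG : IsGroebnerBasis (innerMinors K P) (innerIdeal K P)) : ChainCondition P := by
  intro a b c hab hbc
  obtain ⟨f, hfI, mf, hmf, hmf_eq⟩ := exists_isLeadMon_of_chain (K := K) hab hbc
  obtain ⟨_, ⟨A', B', C', D', hAB', hC', hD', rfl⟩, _, _, hmg, hmf', d, hd⟩ :=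
    hG.2 f hfI (fun h => by simp [h, IsLeadMon] at hmf)
  obtain rfl := hmf.unique hmf'
  obtain rfl := hmg.unique (isLeadMon_innerMinor hAB' hC' hD')
  have le_mf (v : Vertex P) (hv : single v 1 ≤ mf) : single v.1 1 ≤ toGrid mf := by
    simpa only [toGrid_single] using toGrid_mono hv
  have hA' := hmf_eq ▸ le_mf A' (hd ▸ le_add_right le_self_add)
  have hB' := hmf_eq ▸ le_mf B' (hd ▸ le_add_right le_add_self)
  have := hab.1; have := hab.2.1; have := hbc.1; have := hbc.2.1
  rcases eq_or_eq_or_eq_of_single_le hA' with h | h | h <;>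
    rcases eq_or_eq_or_eq_of_single_le hB' with h' | h' | h' <;> rw [h, h'] at hAB' <;>
    first | exact .inl hAB' | exact .inr hAB' |
      (have h₁ := hAB'.1; have h₂ := hAB'.2.1; (try dsimp only at h₁ h₂); omega)

theorem innerMinors_monic :
    ∀ g ∈ innerMinors K P, ∃ m, IsLeadMon g m ∧ MvPolynomial.coeff m g = 1 := by
  rintro _ ⟨A, B, C, D, hAB, hC, hD, rfl⟩
  refine ⟨_, isLeadMon_innerMinor hAB hC hD, ?_⟩
  rw [X_mul_X_sub_X_mul_X]
  simp [coeff_monomial, (monLt_antiDiag_diag hAB hC hD).ne'.symm]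

theorem totalDegree_of_mem_innerMinors : ∀ g ∈ innerMinors K P, g.totalDegree = 2 := by
  rintro _ ⟨A, B, C, D, hAB, hC, hD, rfl⟩
  exact totalDegree_innerMinor hAB hC hD

end Polyomino

/-- The inner 2-minors of `P` form a reduced quadratic Gröbner basis of
`I_P` with respect to `<¹_lex` if and only if for any two inner intervals `[a,b]` and
`[b,c]` of `P`, with `e = (b.1, a.2)` and `d = (a.1, b.2)` the anti-diagonal corners of
`[a,b]`, at least one of `[e,c]`, `[d,c]` is an inner interval of `P`. -/
theorem reduced_groebner_iff (K : Type*) [Field K] (P : Finset Cell) :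
    (IsReducedGroebnerBasis (innerMinors K P) (innerIdeal K P) ∧
        ∀ g ∈ innerMinors K P, MvPolynomial.totalDegree g = 2) ↔
      ∀ a b c : ℕ × ℕ, InnerInterval P a b → InnerInterval P b c →
        (InnerInterval P (b.1, a.2) c ∨ InnerInterval P (a.1, b.2) c) :=
  ⟨fun h => Polyomino.chainCondition_of_isGroebnerBasis h.1.1,
    fun H => ⟨⟨Polyomino.isGroebnerBasis_innerMinors H, Polyomino.innerMinors_monic,
      Polyomino.innerMinors_reduced⟩, Polyomino.totalDegree_of_mem_innerMinors⟩⟩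
end
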